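/- arXiv:2109.08991 — 2 statements merged into one kernel-verified Lean document; each statement's English description precedes it below -/
import Mathlib

section
/- Let W be uniform on [1..b], independent of M₀, M₁ which are i.i.d. uniform on {0,1}. Let θ : [1..b] → {0,1} and η : [1..b] → {0,1} be functions and Z₀ = M_{θ(W)} ⊕ η(W). Suppose there exists a random variable G ∈ {0,1} with H(G | Z₀, W) = 0 and H(M₀, M₁ | G, M₀⊕M₁) = 0. Then θ is constant, i.e., θ(1) = θ(2) = ⋯ = θ(b). -/
/-!
Let `γ w a₀ a₁` be a value that `G` takes with nonzero outer measure on the atom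
`{W = w, M₀ = a₀, M₁ = a₁}`. A vanishing conditional entropy `H(X | Y)` forces `X` to be
constant (up to null sets) on every fibre of `Y` of measure `< 1`, and all fibres used here have
measure `≤ 1/2`. So `γ w a₀ a₁` depends only on `a_{θ w}`, and `(γ w a₀ a₁, a₀ + a₁)`
determines `(a₀, a₁)`. If `θ w = 0` and `θ w' = 1`, then `γ w 0 1 ≠ γ w 1 0`, while
`γ w' 0 0 = γ w' 1 0` differs from `γ w 1 0 = γ w 1 1` (both atoms have `a₀ + a₁ = 0`) and from
`γ w 0 1` (both have `a₀ + a₁ = 1`): three pairwise distinct elements of `ZMod 2`.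
-/

open MeasureTheory ENNReal

/-- Shannon entropy (in nats) of a finitely-valued random variable. -/
noncomputable def ent {Ω α : Type*} [MeasurableSpace Ω] [Fintype α]
    (μ : Measure Ω) (X : Ω → α) : ℝ :=
  ∑ a : α, Real.negMulLog ((μ (X ⁻¹' {a})).toReal)

/-- Conditional Shannon entropy H(X | Y) = H(X, Y) - H(Y). -/
noncomputable def condEnt {Ω α β : Type*} [MeasurableSpace Ω] [Fintype α] [Fintype β]
    (μ : Measure Ω) (X : Ω → α) (Y : Ω → β) : ℝ :=
  ent μ (fun ω => (X ω, Y ω)) - ent μ Y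

section NegMulLog

open Real

lemma neg_mul_log_le_negMulLog {p q : ℝ} (hp : 0 ≤ p) (hpq : p ≤ q) :
    -(p * log q) ≤ negMulLog p := by
  rcases hp.eq_or_lt with rfl | hp
  · simp
  · rw [negMulLog, neg_mul, neg_le_neg_iff]
    exact mul_le_mul_of_nonneg_left (log_le_log hp hpq) hp.le

lemma neg_mul_log_lt_negMulLog {p q : ℝ} (hp : 0 < p) (hpq : p < q) :
    -(p * log q) < negMulLog p := by
  rw [negMulLog, neg_mul, neg_lt_neg_iff]
  exact mul_lt_mul_of_pos_left (log_lt_log hp hpq) hp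

lemma negMulLog_le_neg_mul_log {q s : ℝ} (hq₀ : 0 ≤ q) (hq₁ : q ≤ 1) (hqs : q ≤ s) :
    negMulLog q ≤ -(s * log q) := by
  rw [negMulLog, neg_mul, neg_le_neg_iff]
  exact mul_le_mul_of_nonpos_right hqs (log_nonpos hq₀ hq₁)

lemma negMulLog_lt_neg_mul_log {q s : ℝ} (hq₀ : 0 < q) (hq₁ : q < 1) (hqs : q < s) :
    negMulLog q < -(s * log q) := by
  rw [negMulLog, neg_mul, neg_lt_neg_iff]
  exact mul_lt_mul_of_neg_right hqs (log_neg hq₀ hq₁)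

variable {ι : Type*} [Fintype ι] {p : ι → ℝ} {q : ℝ}

lemma negMulLog_le_sum_negMulLog (hp : ∀ i, 0 ≤ p i) (hpq : ∀ i, p i ≤ q) (hq₀ : 0 ≤ q)
    (hq₁ : q ≤ 1) (hsum : q ≤ ∑ i, p i) : negMulLog q ≤ ∑ i, negMulLog (p i) :=
  calc negMulLog q ≤ -((∑ i, p i) * log q) := negMulLog_le_neg_mul_log hq₀ hq₁ hsum
    _ = ∑ i, -(p i * log q) := by rw [Finset.sum_mul, Finset.sum_neg_distrib]
    _ ≤ ∑ i, negMulLog (p i) :=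
      Finset.sum_le_sum fun i _ => neg_mul_log_le_negMulLog (hp i) (hpq i)

/-- Strictness comes either from an atom `0 < p k < q`, or, when both atoms carry the full
mass `q`, from `∑ p > q` together with `log q < 0`. -/
lemma negMulLog_lt_sum_negMulLog (hp : ∀ i, 0 ≤ p i) (hpq : ∀ i, p i ≤ q) (hq₁ : q < 1)
    (hsum : q ≤ ∑ i, p i) {i j : ι} (hij : i ≠ j) (hi : 0 < p i) (hj : 0 < p j) :
    negMulLog q < ∑ i, negMulLog (p i) := by
  classical
  have hq₀ : 0 < q := hi.trans_le (hpq i)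
  by_cases hfull : p i = q ∧ p j = q
  · have hpair : p i + p j ≤ ∑ k, p k := by
      simpa [Finset.sum_pair hij] using
        Finset.sum_le_sum_of_subset_of_nonneg (Finset.subset_univ {i, j}) fun k _ _ => hp k
    calc negMulLog q < -((∑ k, p k) * log q) :=
          negMulLog_lt_neg_mul_log hq₀ hq₁ (by linarith [hfull.1, hfull.2])
      _ = ∑ k, -(p k * log q) := by rw [Finset.sum_mul, Finset.sum_neg_distrib]
      _ ≤ ∑ k, negMulLog (p k) :=
          Finset.sum_le_sum fun k _ => neg_mul_log_le_negMulLog (hp k) (hpq k)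
  · obtain ⟨k, hk, hkq⟩ : ∃ k, 0 < p k ∧ p k < q := by
      rcases not_and_or.1 hfull with h | h
      exacts [⟨i, hi, (hpq i).lt_of_ne h⟩, ⟨j, hj, (hpq j).lt_of_ne h⟩]
    calc negMulLog q ≤ -((∑ k, p k) * log q) := negMulLog_le_neg_mul_log hq₀.le hq₁.le hsum
      _ = ∑ k, -(p k * log q) := by rw [Finset.sum_mul, Finset.sum_neg_distrib]
      _ < ∑ k, negMulLog (p k) :=
          Finset.sum_lt_sum (fun k _ => neg_mul_log_le_negMulLog (hp k) (hpq k))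
            ⟨k, Finset.mem_univ k, neg_mul_log_lt_negMulLog hk hkq⟩

end NegMulLog

lemma measureReal_prod_preimage_le {Ω α β : Type*} [MeasurableSpace Ω] {μ : Measure Ω}
    [IsFiniteMeasure μ] (X : Ω → α) (Y : Ω → β) (y : β) (x : α) :
    μ.real ((fun ω => (X ω, Y ω)) ⁻¹' {(x, y)}) ≤ μ.real (Y ⁻¹' {y}) :=
  measureReal_mono fun _ hω => (Prod.mk.inj hω).2

lemma measureReal_preimage_le_sum {Ω α β : Type*} [MeasurableSpace Ω] [Fintype α]
    {μ : Measure Ω} [IsFiniteMeasure μ] (X : Ω → α) (Y : Ω → β) (y : β) :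
    μ.real (Y ⁻¹' {y}) ≤ ∑ x, μ.real ((fun ω => (X ω, Y ω)) ⁻¹' {(x, y)}) :=
  (measureReal_mono fun ω (hω : Y ω = y) => Set.mem_iUnion.2 ⟨X ω, by simp [hω]⟩).trans
    (measureReal_iUnion_fintype_le _)

section CondEnt

variable {Ω α β : Type*} [MeasurableSpace Ω] [Fintype α]

noncomputable def condEntTerm (μ : Measure Ω) (X : Ω → α) (Y : Ω → β) (y : β) : ℝ :=
  ∑ x, Real.negMulLog (μ.real ((fun ω => (X ω, Y ω)) ⁻¹' {(x, y)})) -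
    Real.negMulLog (μ.real (Y ⁻¹' {y}))

lemma condEnt_eq_sum_condEntTerm [Fintype β] (μ : Measure Ω) (X : Ω → α) (Y : Ω → β) :
    condEnt μ X Y = ∑ y, condEntTerm μ X Y y := by
  simp only [condEnt, ent, condEntTerm, measureReal_def, Fintype.sum_prod_type]
  rw [Finset.sum_comm, Finset.sum_sub_distrib]

variable {μ : Measure Ω} [IsProbabilityMeasure μ] (X : Ω → α) (Y : Ω → β) (y : β)

lemma condEntTerm_nonneg : 0 ≤ condEntTerm μ X Y y :=
  sub_nonneg.2 <| negMulLog_le_sum_negMulLog (fun _ => measureReal_nonneg)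
    (measureReal_prod_preimage_le X Y y) measureReal_nonneg measureReal_le_one
    (measureReal_preimage_le_sum X Y y)

variable {X Y y}

lemma condEntTerm_pos (hy : μ (Y ⁻¹' {y}) < 1) {x x' : α} (hxx' : x ≠ x')
    (hx : μ ((fun ω => (X ω, Y ω)) ⁻¹' {(x, y)}) ≠ 0)
    (hx' : μ ((fun ω => (X ω, Y ω)) ⁻¹' {(x', y)}) ≠ 0) : 0 < condEntTerm μ X Y y :=
  sub_pos.2 <| negMulLog_lt_sum_negMulLog (fun _ => measureReal_nonneg)
    (measureReal_prod_preimage_le X Y y)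
    (by simpa [measureReal_def] using (toReal_lt_toReal (measure_ne_top μ _) one_ne_top).2 hy)
    (measureReal_preimage_le_sum X Y y) hxx' (toReal_pos hx (measure_ne_top μ _))
    (toReal_pos hx' (measure_ne_top μ _))

lemma eq_of_condEnt_eq_zero [Fintype β] (h : condEnt μ X Y = 0) (hy : μ (Y ⁻¹' {y}) < 1)
    {s t : Set Ω} (hs : μ s ≠ 0) (ht : μ t ≠ 0) {x x' : α}
    (hsx : s ⊆ {ω | X ω = x ∧ Y ω = y}) (htx : t ⊆ {ω | X ω = x' ∧ Y ω = y}) : x = x' := by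
  have hfib : ∀ {u : Set Ω} {a : α}, μ u ≠ 0 → u ⊆ {ω | X ω = a ∧ Y ω = y} →
      μ ((fun ω => (X ω, Y ω)) ⁻¹' {(a, y)}) ≠ 0 := fun hu hua hnull =>
    hu (measure_mono_null (fun ω hω => by simpa using hua hω) hnull)
  by_contra hxx'
  have hpos : 0 < condEnt μ X Y := by
    rw [condEnt_eq_sum_condEntTerm]
    exact Finset.sum_pos' (fun y _ => condEntTerm_nonneg X Y y)
      ⟨y, Finset.mem_univ y, condEntTerm_pos hy hxx' (hfib hs hsx) (hfib ht htx)⟩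
  exact hpos.ne' h

end CondEnt

lemma exists_measure_inter_preimage_ne_zero {Ω α : Type*} [MeasurableSpace Ω] [Countable α]
    {μ : Measure Ω} {s : Set Ω} (hs : μ s ≠ 0) (G : Ω → α) :
    ∃ a, μ (s ∩ G ⁻¹' {a}) ≠ 0 := by
  by_contra! h
  have hcover : s ⊆ ⋃ a, s ∩ G ⁻¹' {a} := fun ω hω => Set.mem_iUnion.2 ⟨G ω, hω, rfl⟩
  exact hs (measure_mono_null hcover (measure_iUnion_null h))

section EqualityChecker

variable {Ω : Type*} [MeasurableSpace Ω] {μ : Measure Ω} {b : ℕ} {W : Ω → Fin b}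
  {M₀ M₁ : Ω → ZMod 2}

lemma measure_lt_one_of_subset_preimage_range (hb : 0 < b)
    (hjoint : ∀ (w : Fin b) (a₀ a₁ : ZMod 2),
      μ {ω | W ω = w ∧ M₀ ω = a₀ ∧ M₁ ω = a₁} = ((4 * b : ℕ) : ℝ≥0∞)⁻¹)
    {S : Set Ω} (f : Fin b × ZMod 2 → Fin b × ZMod 2 × ZMod 2)
    (hS : S ⊆ (fun ω => (W ω, M₀ ω, M₁ ω)) ⁻¹' Set.range f) : μ S < 1 := by
  have hcover : S ⊆ ⋃ i, {ω | W ω = (f i).1 ∧ M₀ ω = (f i).2.1 ∧ M₁ ω = (f i).2.2} :=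
    fun ω hω => by
      obtain ⟨i, hi⟩ := hS hω
      exact Set.mem_iUnion.2 ⟨i, by simp [hi]⟩
  calc μ S ≤ ∑ i, μ {ω | W ω = (f i).1 ∧ M₀ ω = (f i).2.1 ∧ M₁ ω = (f i).2.2} :=
        (measure_mono hcover).trans (measure_iUnion_fintype_le μ _)
    _ = ((2 * b : ℕ) : ℝ≥0∞) / ((4 * b : ℕ) : ℝ≥0∞) := by
        simp [hjoint, div_eq_mul_inv, mul_comm]
    _ < 1 := by
        rw [ENNReal.div_lt_iff (Or.inl (by exact_mod_cast (by omega : 4 * b ≠ 0)))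
          (Or.inl (natCast_ne_top _)), one_mul]
        exact_mod_cast (by omega : 2 * b < 4 * b)

variable {θ η : Fin b → ZMod 2} {Z₀ G : Ω → ZMod 2}

lemma measure_preimage_Z₀_W_lt_one (hb : 0 < b)
    (hjoint : ∀ (w : Fin b) (a₀ a₁ : ZMod 2),
      μ {ω | W ω = w ∧ M₀ ω = a₀ ∧ M₁ ω = a₁} = ((4 * b : ℕ) : ℝ≥0∞)⁻¹)
    (hZ₀ : ∀ ω, Z₀ ω = (if θ (W ω) = 0 then M₀ ω else M₁ ω) + η (W ω)) (z : ZMod 2)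
    (w : Fin b) : μ ((fun ω => (Z₀ ω, W ω)) ⁻¹' {(z, w)}) < 1 := by
  by_cases hθ : θ w = 0
  · refine measure_lt_one_of_subset_preimage_range hb hjoint (fun i => (w, z - η w, i.2)) ?_
    rintro ω hω
    obtain ⟨rfl, rfl⟩ := Prod.mk.inj hω
    exact ⟨(W ω, M₁ ω), by simp [hZ₀, hθ]⟩
  · refine measure_lt_one_of_subset_preimage_range hb hjoint (fun i => (w, i.2, z - η w)) ?_
    rintro ω hω
    obtain ⟨rfl, rfl⟩ := Prod.mk.inj hω
    exact ⟨(W ω, M₀ ω), by simp [hZ₀, hθ]⟩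

lemma measure_preimage_G_add_lt_one (hb : 0 < b)
    (hjoint : ∀ (w : Fin b) (a₀ a₁ : ZMod 2),
      μ {ω | W ω = w ∧ M₀ ω = a₀ ∧ M₁ ω = a₁} = ((4 * b : ℕ) : ℝ≥0∞)⁻¹) (g s : ZMod 2) :
    μ ((fun ω => (G ω, M₀ ω + M₁ ω)) ⁻¹' {(g, s)}) < 1 := by
  refine measure_lt_one_of_subset_preimage_range hb hjoint (fun i => (i.1, i.2, s - i.2)) ?_
  rintro ω hω
  obtain ⟨-, rfl⟩ := Prod.mk.inj hω
  exact ⟨(W ω, M₀ ω), by simp⟩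

variable {γ : Fin b → ZMod 2 → ZMod 2 → ZMod 2}

lemma atomValue_eq_of_ite_eq (hb : 0 < b)
    (hjoint : ∀ (w : Fin b) (a₀ a₁ : ZMod 2),
      μ {ω | W ω = w ∧ M₀ ω = a₀ ∧ M₁ ω = a₁} = ((4 * b : ℕ) : ℝ≥0∞)⁻¹)
    (hZ₀ : ∀ ω, Z₀ ω = (if θ (W ω) = 0 then M₀ ω else M₁ ω) + η (W ω))
    [IsProbabilityMeasure μ] (hG1 : condEnt μ G (fun ω => (Z₀ ω, W ω)) = 0)
    (hγ : ∀ w a₀ a₁, μ ({ω | W ω = w ∧ M₀ ω = a₀ ∧ M₁ ω = a₁} ∩ G ⁻¹' {γ w a₀ a₁}) ≠ 0)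
    {w : Fin b} {a₀ a₁ a₀' a₁' : ZMod 2}
    (h : (if θ w = 0 then a₀ else a₁) = (if θ w = 0 then a₀' else a₁')) :
    γ w a₀ a₁ = γ w a₀' a₁' := by
  have hsub : ∀ c₀ c₁, {ω | W ω = w ∧ M₀ ω = c₀ ∧ M₁ ω = c₁} ∩ G ⁻¹' {γ w c₀ c₁} ⊆
      {ω | G ω = γ w c₀ c₁ ∧ (Z₀ ω, W ω) = ((if θ w = 0 then c₀ else c₁) + η w, w)} := by
    rintro c₀ c₁ ω ⟨⟨rfl, rfl, rfl⟩, hG⟩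
    exact ⟨hG, by simp [hZ₀]⟩
  refine eq_of_condEnt_eq_zero hG1 (measure_preimage_Z₀_W_lt_one hb hjoint hZ₀ _ w)
    (hγ w a₀ a₁) (hγ w a₀' a₁') (hsub a₀ a₁) ?_
  rw [h]
  exact hsub a₀' a₁'

lemma atomValue_ne_of_add_eq (hb : 0 < b)
    (hjoint : ∀ (w : Fin b) (a₀ a₁ : ZMod 2),
      μ {ω | W ω = w ∧ M₀ ω = a₀ ∧ M₁ ω = a₁} = ((4 * b : ℕ) : ℝ≥0∞)⁻¹)
    [IsProbabilityMeasure μ]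
    (hG2 : condEnt μ (fun ω => (M₀ ω, M₁ ω)) (fun ω => (G ω, M₀ ω + M₁ ω)) = 0)
    (hγ : ∀ w a₀ a₁, μ ({ω | W ω = w ∧ M₀ ω = a₀ ∧ M₁ ω = a₁} ∩ G ⁻¹' {γ w a₀ a₁}) ≠ 0)
    {w w' : Fin b} {a₀ a₁ a₀' a₁' : ZMod 2} (hadd : a₀ + a₁ = a₀' + a₁')
    (hpair : (a₀, a₁) ≠ (a₀', a₁')) : γ w a₀ a₁ ≠ γ w' a₀' a₁' := by
  intro hγeq
  have hsub : ∀ v c₀ c₁, {ω | W ω = v ∧ M₀ ω = c₀ ∧ M₁ ω = c₁} ∩ G ⁻¹' {γ v c₀ c₁} ⊆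
      {ω | (M₀ ω, M₁ ω) = (c₀, c₁) ∧ (G ω, M₀ ω + M₁ ω) = (γ v c₀ c₁, c₀ + c₁)} := by
    rintro v c₀ c₁ ω ⟨⟨-, rfl, rfl⟩, hG⟩
    exact ⟨rfl, by simpa using hG⟩
  refine hpair (eq_of_condEnt_eq_zero hG2 (measure_preimage_G_add_lt_one hb hjoint _ _)
    (hγ w a₀ a₁) (hγ w' a₀' a₁') (hsub w a₀ a₁) ?_)
  rw [hγeq, hadd]
  exact hsub w' a₀' a₁'

end EqualityChecker

/-- the virtual equality checker lemma. -/
theorem stmt8 {Ω : Type*} [MeasurableSpace Ω] (μ : Measure Ω) [IsProbabilityMeasure μ]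
    (b : ℕ) (hb : 0 < b) (W : Ω → Fin b) (M₀ M₁ : Ω → ZMod 2)
    (hjoint : ∀ (w : Fin b) (a₀ a₁ : ZMod 2),
      μ {ω | W ω = w ∧ M₀ ω = a₀ ∧ M₁ ω = a₁} = ((4 * b : ℕ) : ℝ≥0∞)⁻¹)
    (θ η : Fin b → ZMod 2)
    (Z₀ : Ω → ZMod 2)
    (hZ₀ : ∀ ω, Z₀ ω = (if θ (W ω) = 0 then M₀ ω else M₁ ω) + η (W ω))
    (G : Ω → ZMod 2)
    (hG1 : condEnt μ G (fun ω => (Z₀ ω, W ω)) = 0)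
    (hG2 : condEnt μ (fun ω => (M₀ ω, M₁ ω)) (fun ω => (G ω, M₀ ω + M₁ ω)) = 0) :
    ∀ w w' : Fin b, θ w = θ w' := by
  intro w w'
  by_contra hne
  wlog hw : θ w = 0 generalizing w w'
  · have hw' : θ w' = 0 := (by decide : ∀ a c : ZMod 2, a ≠ 0 → a ≠ c → c = 0) _ _ hw hne
    exact this w' w (Ne.symm hne) hw'
  have hw' : θ w' = 1 := (by decide : ∀ a c : ZMod 2, a = 0 → a ≠ c → c = 1) _ _ hw hne
  have hatom : ∀ v a₀ a₁, μ {ω | W ω = v ∧ M₀ ω = a₀ ∧ M₁ ω = a₁} ≠ 0 := fun v a₀ a₁ => by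
    rw [hjoint]
    exact ENNReal.inv_ne_zero.2 (natCast_ne_top _)
  choose γ hγ using fun v a₀ a₁ => exists_measure_inter_preimage_ne_zero (hatom v a₀ a₁) G
  have h₀ : γ w 1 0 = γ w 1 1 := atomValue_eq_of_ite_eq hb hjoint hZ₀ hG1 hγ (by simp [hw])
  have h₁ : γ w' 0 0 = γ w' 1 0 := atomValue_eq_of_ite_eq hb hjoint hZ₀ hG1 hγ (by simp [hw'])
  have hx : γ w 0 1 ≠ γ w 1 0 := atomValue_ne_of_add_eq hb hjoint hG2 hγ (by decide) (by decide)
  have hy : γ w' 0 0 ≠ γ w 1 1 := atomValue_ne_of_add_eq hb hjoint hG2 hγ (by decide) (by decide)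
  have hz : γ w' 1 0 ≠ γ w 0 1 := atomValue_ne_of_add_eq hb hjoint hG2 hγ (by decide) (by decide)
  rw [← h₀] at hy
  rw [← h₁] at hz
  exact (by decide : ∀ x y z : ZMod 2, x ≠ y → z ≠ y → z ≠ x → False) _ _ _ hx hy hz
end

section
/- Let X₁ be uniform on [0..k−1] and U uniform on {0,1}, independent, and X₂ with |support(X₂)| ≤ k satisfying H(U | X₁, X₂) = H(X₂ | X₁, U) = H(X₁ | X₂, U) = 0. Then the characteristic bipartite graph of (X₁, X₂) — with left vertices support(X₁), right vertices support(X₂), and an edge (x₁,x₂) whenever P(X₁=x₁, X₂=x₂) > 0 — has every vertex of degree exactly 2, and the pair (X₁,X₂) is uniformly distributed over the edge set. -/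
open MeasureTheory ENNReal

/-! Put `c = 1 / (2k)` and `T = ((X₁, U), X₂)`. Every cell of `T` has mass at most `c`, since it
lies in a cell of `(X₁, U)`, while the cells of `T` over a fixed value of `(X₁, U)` carry at least
`c` together. As `H(T) = H(X₁, U) = -log c`, the bound `-q log q ≥ -q log c` for `q ≤ c` forces
every cell of `T` to have mass `0` or `c`: `X₂ = f (X₁, U)` and `T` is uniform on the graph of `f`.
Coarsening `T` to `(X₁, X₂)` or to `(X₂, U)` keeps the entropy; since the coarse cells have mass
`0` or at least `c`, the reverse bound `-q log q ≤ -q log c` forces them to have mass `0` or `c`,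
so no two points of the graph are merged: `f (x, ·)` and `f (·, u)` are injective. The bipartite
graph is then the image of `(x, u) ↦ (x, f (x, u))`: left degrees are `2`, right degrees at most
`2`, and `2k` edges on at most `k` right vertices make all right degrees `2`.

No measurability is assumed, so masses of cells are outer measures: only monotonicity and
subadditivity of `μ` are used. -/

open Finset Real

lemma neg_log_mul_le_negMulLog {c q : ℝ} (hq : 0 ≤ q) (hqc : q ≤ c) :
    -log c * q ≤ negMulLog q := by
  rcases hq.eq_or_lt with rfl | hq
  · simp
  · have := log_le_log hq hqc
    rw [negMulLog]
    nlinarith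

lemma negMulLog_le_neg_log_mul {c q : ℝ} (hc : 0 < c) (hq : q = 0 ∨ c ≤ q) :
    negMulLog q ≤ -log c * q := by
  rcases hq with rfl | hcq
  · simp
  · have := log_le_log hc hcq
    rw [negMulLog]
    nlinarith

lemma eq_zero_or_eq_of_negMulLog_eq {c q : ℝ} (hc : 0 < c) (hq : 0 ≤ q)
    (h : negMulLog q = -log c * q) : q = 0 ∨ q = c := by
  rcases hq.eq_or_lt with rfl | hq
  · exact .inl rfl
  · have : q * (log q - log c) = 0 := by rw [negMulLog] at h; linarith
    exact .inr (log_injOn_pos hq hc (sub_eq_zero.1 ((mul_eq_zero.1 this).resolve_left hq.ne')))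

section TwoValued

variable {ι : Type*} [Fintype ι] {q : ι → ℝ} {c S : ℝ}

lemma sum_negMulLog_of_eq_zero_or_eq (hq : ∀ i, q i = 0 ∨ q i = c) :
    ∑ i, negMulLog (q i) = -log c * ∑ i, q i := by
  rw [mul_sum]
  refine sum_congr rfl fun i _ => ?_
  rcases hq i with h | h <;> simp [h, negMulLog, mul_comm]

lemma sum_eq_and_eq_zero_or_eq_of_le (hc0 : 0 < c) (hc1 : c < 1) (hq0 : ∀ i, 0 ≤ q i)
    (hqc : ∀ i, q i ≤ c) (hS : S ≤ ∑ i, q i) (hent : ∑ i, negMulLog (q i) ≤ -log c * S) :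
    ∑ i, q i = S ∧ ∀ i, q i = 0 ∨ q i = c := by
  have hL : 0 < -log c := neg_pos.2 (log_neg hc0 hc1)
  have hterm i : -log c * q i ≤ negMulLog (q i) := neg_log_mul_le_negMulLog (hq0 i) (hqc i)
  have hsum : -log c * ∑ i, q i ≤ ∑ i, negMulLog (q i) := by
    rw [mul_sum]; exact sum_le_sum fun i _ => hterm i
  have htot : ∑ i, q i = S := le_antisymm (le_of_mul_le_mul_left (hsum.trans hent) hL) hS
  have heq : ∑ i, -log c * q i = ∑ i, negMulLog (q i) := by
    rw [← mul_sum]; exact le_antisymm hsum (htot ▸ hent)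
  refine ⟨htot, fun i => eq_zero_or_eq_of_negMulLog_eq hc0 (hq0 i) ?_⟩
  exact ((sum_eq_sum_iff_of_le fun i _ => hterm i).1 heq i (mem_univ i)).symm

lemma sum_eq_and_eq_zero_or_eq_of_ge (hc0 : 0 < c) (hc1 : c < 1) (hq : ∀ i, q i = 0 ∨ c ≤ q i)
    (hS : ∑ i, q i ≤ S) (hent : -log c * S ≤ ∑ i, negMulLog (q i)) :
    ∑ i, q i = S ∧ ∀ i, q i = 0 ∨ q i = c := by
  have hL : 0 < -log c := neg_pos.2 (log_neg hc0 hc1)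
  have hq0 i : 0 ≤ q i := (hq i).elim (·.ge) (hc0.le.trans ·)
  have hterm i : negMulLog (q i) ≤ -log c * q i := negMulLog_le_neg_log_mul hc0 (hq i)
  have hsum : ∑ i, negMulLog (q i) ≤ -log c * ∑ i, q i := by
    rw [mul_sum]; exact sum_le_sum fun i _ => hterm i
  have htot : ∑ i, q i = S := le_antisymm hS (le_of_mul_le_mul_left (hent.trans hsum) hL)
  have heq : ∑ i, negMulLog (q i) = ∑ i, -log c * q i := by
    rw [← mul_sum]; exact le_antisymm hsum (htot ▸ hent)
  exact ⟨htot, fun i => eq_zero_or_eq_of_negMulLog_eq hc0 (hq0 i)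
    ((sum_eq_sum_iff_of_le fun i _ => hterm i).1 heq i (mem_univ i))⟩

lemma exists_eq_ite_of_sum_eq {α β : Type*} [Fintype β] [DecidableEq β] {q : α → β → ℝ} (hc : 0 < c)
    (hq : ∀ a b, q a b = 0 ∨ q a b = c) (hsum : ∀ a, ∑ b, q a b = c) :
    ∃ f : α → β, ∀ a b, q a b = if b = f a then c else 0 := by
  have hex a : ∃ b, q a b ≠ 0 := by
    by_contra! h
    exact hc.ne' ((hsum a).symm.trans (sum_eq_zero fun b _ => h b))
  choose f hf using hex
  refine ⟨f, fun a b => ?_⟩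
  have hfa : q a (f a) = c := (hq a (f a)).resolve_left (hf a)
  split_ifs with hb
  · exact hb ▸ hfa
  · refine (hq a b).resolve_right fun hab => ?_
    have := sum_le_sum_of_subset_of_nonneg (subset_univ {b, f a})
      fun b' _ _ => (hq a b').elim (·.ge) (· ▸ hc.le)
    rw [sum_pair hb, hab, hfa, hsum] at this
    linarith

end TwoValued

lemma preimage_pair_singleton {Ω α β : Type*} (A : Ω → α) (B : Ω → β) (a : α) (b : β) :
    (fun ω => (A ω, B ω)) ⁻¹' {(a, b)} = {ω | A ω = a ∧ B ω = b} := by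
  ext; simp

section Cells

variable {Ω α β γ δ : Type*} [MeasurableSpace Ω] {μ : Measure Ω}

lemma ent_comp_of_injective [Fintype γ] [Fintype δ] (T : Ω → γ) {e : γ → δ}
    (he : Function.Injective e) : ent μ (fun ω => e (T ω)) = ent μ T := by
  classical
  refine (Fintype.sum_of_injective e he _ _ (fun d hd => ?_) fun t => ?_).symm
  · have : (fun ω => e (T ω)) ⁻¹' {d} = ∅ :=
      Set.eq_empty_of_forall_notMem fun ω hω => hd ⟨T ω, hω⟩
    simp [this]
  · simp only [Set.preimage, Set.mem_singleton_iff, he.eq_iff]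

lemma ent_eq_of_condEnt_eq_zero [Fintype α] [Fintype β] [Fintype γ] {X : Ω → α} {Y : Ω → β}
    {T : Ω → γ} {e : γ → α × β} (he : Function.Injective e) (hT : ∀ ω, e (T ω) = (X ω, Y ω))
    (h : condEnt μ X Y = 0) : ent μ T = ent μ Y := by
  rw [← ent_comp_of_injective T he, funext hT]
  exact sub_eq_zero.1 h

lemma measure_comp_preimage_eq_zero_iff [Countable γ] (T : Ω → γ) (g : γ → δ) (w : δ) :
    μ ((fun ω => g (T ω)) ⁻¹' {w}) = 0 ↔ ∀ t, g t = w → μ (T ⁻¹' {t}) = 0 := by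
  have : (fun ω => g (T ω)) ⁻¹' {w} = ⋃ t, ⋃ (_ : g t = w), T ⁻¹' {t} := by ext; simp
  simp [this, measure_iUnion_null_iff]

variable [IsFiniteMeasure μ]

lemma measureReal_preimage_le_comp (T : Ω → γ) (g : γ → δ) (t : γ) :
    μ.real (T ⁻¹' {t}) ≤ μ.real ((fun ω => g (T ω)) ⁻¹' {g t}) :=
  measureReal_mono fun _ h => congrArg g h

lemma measureReal_comp_preimage_le_sum [Fintype γ] [DecidableEq δ] (T : Ω → γ) (g : γ → δ)
    (w : δ) : μ.real ((fun ω => g (T ω)) ⁻¹' {w}) ≤ ∑ t with g t = w, μ.real (T ⁻¹' {t}) := by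
  refine (measureReal_mono (fun ω (h : g (T ω) = w) => ?_) (measure_ne_top μ _)).trans
    (measureReal_biUnion_finset_le _ _)
  exact Set.mem_biUnion (x := T ω) (by simp [h]) rfl

theorem exists_measureReal_pair_eq_ite [Fintype α] [Fintype β] [DecidableEq β]
    {A : Ω → α} {B : Ω → β} {c : ℝ} (hc : Fintype.card α * c = 1) (hc1 : c < 1)
    (hA : ∀ a, μ.real (A ⁻¹' {a}) = c) (hent : ent μ (fun ω => (A ω, B ω)) ≤ ent μ A) :
    ∃ f : α → β, ∀ a b,
      μ.real ((fun ω => (A ω, B ω)) ⁻¹' {(a, b)}) = if b = f a then c else 0 := by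
  classical
  set T := fun ω => (A ω, B ω)
  have hc0 : 0 < c := pos_of_mul_pos_right (hc ▸ one_pos) (Nat.cast_nonneg _)
  have hqc (t : α × β) : μ.real (T ⁻¹' {t}) ≤ c :=
    (measureReal_preimage_le_comp T Prod.fst t).trans_eq (hA t.1)
  have hrow a : c ≤ ∑ b, μ.real (T ⁻¹' {(a, b)}) := by
    have := (hA a).symm.trans_le (measureReal_comp_preimage_le_sum T Prod.fst a)
    rw [sum_filter, Fintype.sum_prod_type, sum_comm,
      sum_congr rfl fun b _ => sum_ite_eq' ..] at this
    simpa using this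
  have hentA : ent μ A = -log c * 1 := by
    simp only [ent, ← measureReal_def, hA, sum_const, card_univ, nsmul_eq_mul, negMulLog]
    linear_combination (-log c) * hc
  have hone : ∑ _a : α, c = 1 := by rw [sum_const, card_univ, nsmul_eq_mul, hc]
  obtain ⟨htot, hq⟩ := sum_eq_and_eq_zero_or_eq_of_le hc0 hc1 (fun _ => measureReal_nonneg)
    hqc (by rw [Fintype.sum_prod_type, ← hone]; exact sum_le_sum fun a _ => hrow a)
    (hent.trans_eq hentA)
  have hrow_eq : ∀ a, ∑ b, μ.real (T ⁻¹' {(a, b)}) = c := by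
    have : ∑ a, ∑ b, μ.real (T ⁻¹' {(a, b)}) = ∑ _a : α, c := by
      rw [← Fintype.sum_prod_type', htot, hone]
    exact fun a => ((sum_eq_sum_iff_of_le fun a _ => hrow a).1 this.symm a (mem_univ a)).symm
  exact exists_eq_ite_of_sum_eq hc0 (fun a b => hq (a, b)) hrow_eq

theorem measureReal_comp_eq_zero_or_eq_and_injOn [Fintype γ] [Fintype δ] {T : Ω → γ}
    (g : γ → δ) {c : ℝ} (hc0 : 0 < c) (hc1 : c < 1)
    (hT : ∀ t, μ.real (T ⁻¹' {t}) = 0 ∨ μ.real (T ⁻¹' {t}) = c)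
    (hent : ent μ T ≤ ent μ (fun ω => g (T ω))) :
    (∀ w, μ.real ((fun ω => g (T ω)) ⁻¹' {w}) = 0 ∨
      μ.real ((fun ω => g (T ω)) ⁻¹' {w}) = c) ∧
      Set.InjOn g {t | μ.real (T ⁻¹' {t}) ≠ 0} := by
  classical
  set W := fun ω => g (T ω)
  have hle := measureReal_comp_preimage_le_sum (μ := μ) T g
  have hW_ge w : μ.real (W ⁻¹' {w}) = 0 ∨ c ≤ μ.real (W ⁻¹' {w}) := by
    by_cases h : ∃ t, g t = w ∧ μ.real (T ⁻¹' {t}) ≠ 0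
    · obtain ⟨t, rfl, ht⟩ := h
      exact .inr (((hT t).resolve_left ht).symm.trans_le (measureReal_preimage_le_comp T g t))
    · push Not at h
      exact .inl (le_antisymm ((hle w).trans_eq (sum_eq_zero fun t ht => h t (mem_filter.1 ht).2))
        measureReal_nonneg)
  obtain ⟨htot, hW⟩ := sum_eq_and_eq_zero_or_eq_of_ge hc0 hc1 hW_ge
    ((sum_le_sum fun w _ => hle w).trans_eq (sum_fiberwise _ g _))
    ((sum_negMulLog_of_eq_zero_or_eq hT).symm.trans_le hent)
  have hfib w : μ.real (W ⁻¹' {w}) = ∑ t with g t = w, μ.real (T ⁻¹' {t}) :=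
    (sum_eq_sum_iff_of_le fun w _ => hle w).1 (htot.trans (sum_fiberwise _ g _).symm) w
      (mem_univ w)
  refine ⟨hW, fun t ht t' ht' hg => by_contra fun hne => ?_⟩
  have hpair : μ.real (T ⁻¹' {t}) + μ.real (T ⁻¹' {t'}) ≤ μ.real (W ⁻¹' {g t}) := by
    rw [hfib, ← sum_pair (f := fun s => μ.real (T ⁻¹' {s})) hne]
    exact sum_le_sum_of_subset_of_nonneg (by simp [insert_subset_iff, hg])
      fun _ _ _ => measureReal_nonneg
  rw [(hT t).resolve_left ht, (hT t').resolve_left ht'] at hpair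
  rcases hW (g t) with h | h <;> linarith

end Cells

section LatinRectangle

variable {α ι β : Type*} {f : α × ι → β}

lemma injective_apply_left (hrow : Function.Injective fun p => (p.1, f p)) (a : α) :
    Function.Injective fun i => f (a, i) :=
  fun i i' h => congrArg Prod.snd (@hrow (a, i) (a, i') (Prod.ext rfl h))

lemma injective_apply_right (hcol : Function.Injective fun p => (f p, p.2)) (i : ι) :
    Function.Injective fun a => f (a, i) :=
  fun a a' h => congrArg Prod.fst (@hcol (a, i) (a', i) (Prod.ext h rfl))

theorem ncard_setOf_exists_apply_eq [Fintype α] [Fintype ι] [Finite β]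
    (hrow : Function.Injective fun p => (p.1, f p)) (hcol : Function.Injective fun p => (f p, p.2))
    {S : Set β} (hS : S.ncard ≤ Fintype.card α) (hfS : ∀ p, f p ∈ S) {b : β} (hb : b ∈ S) :
    {a | ∃ i, f (a, i) = b}.ncard = Fintype.card ι := by
  classical
  have := Fintype.ofFinite β
  set d : β → ℕ := fun b => #{a | ∃ i, f (a, i) = b}
  have hd_le b : d b ≤ Fintype.card ι :=
    calc d b ≤ #(univ.biUnion fun i => ({a | f (a, i) = b} : Finset α)) :=
          card_le_card fun a => by simp
      _ ≤ ∑ i, #({a | f (a, i) = b} : Finset α) := card_biUnion_le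
      _ ≤ ∑ _i : ι, 1 := sum_le_sum fun i _ => card_le_one.2 fun a ha a' ha' =>
          injective_apply_right hcol i ((mem_filter.1 ha).2.trans (mem_filter.1 ha').2.symm)
      _ = Fintype.card ι := by simp
  have hsum : ∑ b, d b = Fintype.card α * Fintype.card ι := by
    have hrange a : #({b | ∃ i, f (a, i) = b} : Finset β) = Fintype.card ι := by
      rw [← card_univ, ← card_image_of_injective univ (injective_apply_left hrow a)]
      congr 1; ext; simp
    simp only [d, card_filter]
    rw [sum_comm]
    simp only [← card_filter, hrange, sum_const, card_univ, smul_eq_mul]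
  have hdS : ∑ b ∈ S.toFinset, d b = ∑ _b ∈ S.toFinset, Fintype.card ι := by
    have hout : ∑ b ∈ S.toFinset, d b = ∑ b, d b :=
      sum_subset (subset_univ _) fun b _ hb => card_eq_zero.2 <| filter_eq_empty_iff.2
        fun a _ ⟨i, hi⟩ => hb (Set.mem_toFinset.2 (hi ▸ hfS (a, i)))
    refine le_antisymm (sum_le_sum fun b _ => hd_le b) ?_
    rw [hout, hsum, sum_const, smul_eq_mul, ← Set.ncard_eq_toFinset_card']
    exact Nat.mul_le_mul_right _ hS
  have := (sum_eq_sum_iff_of_le fun b _ => hd_le b).1 hdS b (Set.mem_toFinset.2 hb)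
  rwa [← coe_filter_univ, Set.ncard_coe_finset]

end LatinRectangle

section Graph

variable {Ω α β δ : Type*} [MeasurableSpace Ω] {μ : Measure Ω} [IsFiniteMeasure μ]
  [DecidableEq β] {A : Ω → α} {B : Ω → β} {f : α → β} {c : ℝ}

theorem measure_comp_ne_zero_iff_of_graph [Finite α] [Finite β] (hc : c ≠ 0)
    (hf : ∀ a b, μ.real ((fun ω => (A ω, B ω)) ⁻¹' {(a, b)}) = if b = f a then c else 0)
    (g : α × β → δ) (w : δ) :
    μ ((fun ω => g (A ω, B ω)) ⁻¹' {w}) ≠ 0 ↔ ∃ a, g (a, f a) = w := by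
  have hT0 a b : μ ((fun ω => (A ω, B ω)) ⁻¹' {(a, b)}) = 0 ↔ b ≠ f a := by
    rw [← measureReal_eq_zero_iff, hf]
    split_ifs with h
    · exact iff_of_false hc (not_not.2 h)
    · exact iff_of_true rfl h
  rw [Ne, measure_comp_preimage_eq_zero_iff (fun ω => (A ω, B ω)) g]
  simp [hT0]

theorem measureReal_comp_eq_zero_or_eq_and_injective_of_graph [Fintype α] [Fintype β]
    [Fintype δ] (hc0 : 0 < c) (hc1 : c < 1)
    (hf : ∀ a b, μ.real ((fun ω => (A ω, B ω)) ⁻¹' {(a, b)}) = if b = f a then c else 0)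
    (g : α × β → δ) (hent : ent μ (fun ω => (A ω, B ω)) ≤ ent μ (fun ω => g (A ω, B ω))) :
    (∀ w, μ.real ((fun ω => g (A ω, B ω)) ⁻¹' {w}) = 0 ∨
      μ.real ((fun ω => g (A ω, B ω)) ⁻¹' {w}) = c) ∧ Function.Injective fun a => g (a, f a) := by
  obtain ⟨hW, hinj⟩ := measureReal_comp_eq_zero_or_eq_and_injOn g hc0 hc1
    (fun ⟨a, b⟩ => by rw [hf]; split_ifs <;> simp) hent
  refine ⟨hW, fun a a' h => congrArg Prod.fst (hinj ?_ ?_ h)⟩ <;> simp [hf, hc0.ne']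

end Graph

/-- the characteristic bipartite graph of `(X₁, X₂)` is
2-regular, and `(X₁, X₂)` is uniform over its edge set. -/
theorem stmt14 {Ω β : Type*} [MeasurableSpace Ω] (μ : Measure Ω) [IsProbabilityMeasure μ]
    [Fintype β] (k : ℕ) (hk : 0 < k) (X₁ : Ω → Fin k) (U : Ω → ZMod 2) (X₂ : Ω → β)
    (hX₁U : ∀ (x : Fin k) (u : ZMod 2),
      μ {ω | X₁ ω = x ∧ U ω = u} = ((2 * k : ℕ) : ℝ≥0∞)⁻¹)
    (hsupp : Set.ncard {z : β | μ (X₂ ⁻¹' {z}) ≠ 0} ≤ k)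
    (h1 : condEnt μ U (fun ω => (X₁ ω, X₂ ω)) = 0)
    (h2 : condEnt μ X₂ (fun ω => (X₁ ω, U ω)) = 0)
    (h3 : condEnt μ X₁ (fun ω => (X₂ ω, U ω)) = 0) :
    (∀ x : Fin k, Set.ncard {z : β | μ {ω | X₁ ω = x ∧ X₂ ω = z} ≠ 0} = 2) ∧
    (∀ z : β, μ (X₂ ⁻¹' {z}) ≠ 0 →
      Set.ncard {x : Fin k | μ {ω | X₁ ω = x ∧ X₂ ω = z} ≠ 0} = 2) ∧
    (∀ (x : Fin k) (z : β), μ {ω | X₁ ω = x ∧ X₂ ω = z} ≠ 0 →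
      μ {ω | X₁ ω = x ∧ X₂ ω = z} = ((2 * k : ℕ) : ℝ≥0∞)⁻¹) := by
  classical
  set c : ℝ := ((2 * k : ℕ) : ℝ)⁻¹
  have hc0 : 0 < c := by positivity
  have hc1 : c < 1 := inv_lt_one_of_one_lt₀ (by exact_mod_cast (by omega : 1 < 2 * k))
  have hcard : (Fintype.card (Fin k × ZMod 2) : ℝ) * c = 1 := by
    rw [Fintype.card_prod, Fintype.card_fin, ZMod.card, mul_comm k]
    exact mul_inv_cancel₀ (by positivity)
  have hA (a : Fin k × ZMod 2) : μ.real ((fun ω => (X₁ ω, U ω)) ⁻¹' {a}) = c := by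
    rw [measureReal_def, preimage_pair_singleton, hX₁U, toReal_inv, toReal_natCast]
  set T : Ω → (Fin k × ZMod 2) × β := fun ω => ((X₁ ω, U ω), X₂ ω)
  have hent_A : ent μ T = ent μ (fun ω => (X₁ ω, U ω)) :=
    ent_eq_of_condEnt_eq_zero Prod.swap_injective (fun _ => rfl) h2
  have hent₁₂ : ent μ T = ent μ (fun ω => (X₁ ω, X₂ ω)) :=
    ent_eq_of_condEnt_eq_zero (e := fun t => (t.1.2, t.1.1, t.2))
      (fun _ _ h => by simp_all [Prod.ext_iff]) (fun _ => rfl) h1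
  have hent₂U : ent μ T = ent μ (fun ω => (X₂ ω, U ω)) :=
    ent_eq_of_condEnt_eq_zero (e := fun t => (t.1.1, t.2, t.1.2))
      (fun _ _ h => by simp_all [Prod.ext_iff]) (fun _ => rfl) h3
  obtain ⟨f, hf⟩ := exists_measureReal_pair_eq_ite hcard hc1 hA hent_A.le
  obtain ⟨hedge_mass, hrow⟩ := measureReal_comp_eq_zero_or_eq_and_injective_of_graph hc0 hc1 hf
    (fun t => (t.1.1, t.2)) hent₁₂.le
  obtain ⟨-, hcol⟩ := measureReal_comp_eq_zero_or_eq_and_injective_of_graph hc0 hc1 hf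
    (fun t => (t.2, t.1.2)) hent₂U.le
  have hedge_ne_zero_iff x z : μ {ω | X₁ ω = x ∧ X₂ ω = z} ≠ 0 ↔ ∃ u, f (x, u) = z := by
    rw [← preimage_pair_singleton]
    exact (measure_comp_ne_zero_iff_of_graph hc0.ne' hf (fun t => (t.1.1, t.2)) (x, z)).trans
      (by simp)
  refine ⟨fun x => ?_, fun z hz => ?_, fun x z hxz => ?_⟩
  · rw [Set.ext (hedge_ne_zero_iff x)]
    exact (Set.ncard_range_of_injective (injective_apply_left hrow x)).trans (Nat.card_zmod 2)
  · rw [Set.ext fun x => hedge_ne_zero_iff x z]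
    exact (ncard_setOf_exists_apply_eq hrow hcol (hsupp.trans_eq (Fintype.card_fin k).symm)
      (fun a => (measure_comp_ne_zero_iff_of_graph hc0.ne' hf Prod.snd _).2 ⟨a, rfl⟩)
      hz).trans (ZMod.card 2)
  · rw [← preimage_pair_singleton] at hxz ⊢
    refine (ENNReal.toReal_eq_toReal_iff' (measure_ne_top _ _) (by simp [hk.ne'])).1 ?_
    rw [toReal_inv, toReal_natCast]
    exact (hedge_mass (x, z)).resolve_left ((measureReal_ne_zero_iff).2 hxz)
end
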